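/- In the algebra 𝔸, the family consisting of a, b, and the elements c·aⁱ·bʲ for all integers i, j ≥ 0 with i + j odd (where c := a·b − b·a and powers are taken in 𝔸) is linearly independent over K. -/

import Mathlib

noncomputable section

/-- The first generator of the free algebra on two generators. -/
def Agen (K : Type*) [Field K] : FreeAlgebra K (Fin 2) := FreeAlgebra.ι K 0

/-- The second generator of the free algebra on two generators. -/
def Bgen (K : Type*) [Field K] : FreeAlgebra K (Fin 2) := FreeAlgebra.ι K 1

/-- The relations `a·a·b = a·b·a` and `b·b·a = b·a·b`. -/
inductive ARel (K : Type*) [Field K] :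
    FreeAlgebra K (Fin 2) → FreeAlgebra K (Fin 2) → Prop
  | aab : ARel K (Agen K * Agen K * Bgen K) (Agen K * Bgen K * Agen K)
  | bba : ARel K (Bgen K * Bgen K * Agen K) (Bgen K * Agen K * Bgen K)

/-- The algebra `𝔸`: the quotient of the free unital associative `K`-algebra on two
generators `a`, `b` by the two-sided ideal generated by `a·a·b − a·b·a` and
`b·b·a − b·a·b`. -/
abbrev AAlg (K : Type*) [Field K] := RingQuot (ARel K)

/-- The image of the generator `a` in `𝔸`. -/
def aA (K : Type*) [Field K] : AAlg K := RingQuot.mkAlgHom K (ARel K) (Agen K)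

/-- The image of the generator `b` in `𝔸`. -/
def bA (K : Type*) [Field K] : AAlg K := RingQuot.mkAlgHom K (ARel K) (Bgen K)

/-- The commutator `c := a·b − b·a` in `𝔸`. -/
def cA (K : Type*) [Field K] : AAlg K := aA K * bA K - bA K * aA K

/-!
Sending `a ↦ [[0, 1], [0, x]]` and `b ↦ [[0, 0], [0, y]]` gives a representation of `𝔸` by
`2 × 2` matrices over `K[x, y]` in which `c·aⁱ·bʲ ↦ [[0, xⁱ yʲ⁺¹], [0, 0]]`. The `(1, 1)` entry
maps `a, b` to the independent monomials `x, y` and kills every `c·aⁱ·bʲ`, while the `(0, 1)` entry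
maps the `c·aⁱ·bʲ` to pairwise distinct monomials; a family that is triangular in this sense is
linearly independent.
-/

open MvPolynomial

theorem LinearIndependent.sumElim_of_comp_eq_zero {R M N ι κ : Type*} [Ring R]
    [AddCommGroup M] [Module R M] [AddCommGroup N] [Module R N] {f : ι → M} {g : κ → M}
    (φ : M →ₗ[R] N) (hf : LinearIndependent R (φ ∘ f)) (hg : LinearIndependent R g)
    (hφg : ∀ k, φ (g k) = 0) : LinearIndependent R (Sum.elim f g) :=
  .sum_type (hf.of_comp φ) hg <| (Submodule.range_ker_disjoint hf).mono_right <|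
    Submodule.span_le.2 <| Set.range_subset_iff.2 hφg

theorem MvPolynomial.linearIndependent_X_pow_mul_X_pow {R σ : Type*} [CommSemiring R]
    {s t : σ} (hst : s ≠ t) :
    LinearIndependent R (fun p : ℕ × ℕ => (X s ^ p.1 * X t ^ p.2 : MvPolynomial σ R)) := by
  have hinj :
      Function.Injective fun p : ℕ × ℕ => Finsupp.single s p.1 + Finsupp.single t p.2 := by
    intro p q h
    have hs := DFunLike.congr_fun h s
    have ht := DFunLike.congr_fun h t
    simp [hst, hst.symm] at hs ht
    exact Prod.ext hs ht
  convert (basisMonomials σ R).linearIndependent.comp _ hinj with p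
  simp [X_pow_eq_monomial, monomial_mul]

theorem Matrix.fin_two_mul_of_col_zero {R : Type*} [Semiring R] (p d q e : R) :
    !![0, p; 0, d] * !![0, q; 0, e] = !![0, p * e; 0, d * e] := by
  rw [Matrix.mul_fin_two]; simp

theorem Matrix.fin_two_mul_pow_of_col_zero {R : Type*} [Semiring R] (p q d : R) (n : ℕ) :
    !![0, p; 0, 0] * !![0, q; 0, d] ^ n = !![0, p * d ^ n; 0, 0] := by
  induction n with
  | zero => simp
  | succ n ih =>
    rw [pow_succ, ← mul_assoc, ih, fin_two_mul_of_col_zero, zero_mul, pow_succ, mul_assoc]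

namespace AAlg

variable (K : Type*) [Field K]

/-- A product of matrices `[[0, pₖ], [0, dₖ]]` is `[[0, p₁ d₂ ⋯ dₙ], [0, d₁ ⋯ dₙ]]`, which depends
only on the first factor and the multiset of the others, so both sides of each relation agree. -/
def toMatrix : AAlg K →ₐ[K] Matrix (Fin 2) (Fin 2) (MvPolynomial (Fin 2) K) :=
  RingQuot.liftAlgHom K ⟨FreeAlgebra.lift K ![!![0, 1; 0, X 0], !![0, 0; 0, X 1]], by
    rintro _ _ (_ | _) <;>
      simp only [Agen, Bgen, map_mul, FreeAlgebra.lift_ι_apply, Matrix.cons_val_zero,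
        Matrix.cons_val_one, Matrix.fin_two_mul_of_col_zero] <;>
      ring_nf⟩

theorem toMatrix_aA : toMatrix K (aA K) = !![0, 1; 0, X 0] := by
  simp [toMatrix, aA, Agen]

theorem toMatrix_bA : toMatrix K (bA K) = !![0, 0; 0, X 1] := by
  simp [toMatrix, bA, Bgen]

theorem toMatrix_cA : toMatrix K (cA K) = !![0, X 1; 0, 0] := by
  rw [cA, map_sub, map_mul, map_mul, toMatrix_aA, toMatrix_bA, Matrix.fin_two_mul_of_col_zero,
    Matrix.fin_two_mul_of_col_zero]
  ext i j
  fin_cases i <;> fin_cases j <;> simp [mul_comm]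

theorem toMatrix_cA_mul_pow_mul_pow (i j : ℕ) :
    toMatrix K (cA K * aA K ^ i * bA K ^ j) = !![0, X 0 ^ i * X 1 ^ (j + 1); 0, 0] := by
  rw [map_mul, map_mul, map_pow, map_pow, toMatrix_aA, toMatrix_bA, toMatrix_cA,
    Matrix.fin_two_mul_pow_of_col_zero, Matrix.fin_two_mul_pow_of_col_zero]
  ring_nf

def cornerEntry : AAlg K →ₗ[K] MvPolynomial (Fin 2) K :=
  Matrix.entryLinearMap K _ 0 1 ∘ₗ (toMatrix K).toLinearMap

def diagEntry : AAlg K →ₗ[K] MvPolynomial (Fin 2) K :=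
  Matrix.entryLinearMap K _ 1 1 ∘ₗ (toMatrix K).toLinearMap

theorem diagEntry_cA_mul_pow_mul_pow (i j : ℕ) :
    diagEntry K (cA K * aA K ^ i * bA K ^ j) = 0 := by
  simp [diagEntry, toMatrix_cA_mul_pow_mul_pow]

theorem linearIndependent_diagEntry_aA_bA :
    LinearIndependent K (diagEntry K ∘ fun t : Bool => cond t (aA K) (bA K)) := by
  have h : diagEntry K ∘ (fun t : Bool => cond t (aA K) (bA K)) = X ∘ fun t => cond t 0 1 := by
    funext t
    cases t <;> simp [diagEntry, toMatrix_aA, toMatrix_bA]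
  rw [h]
  exact (linearIndependent_X (R := K) (σ := Fin 2)).comp _ (by decide)

theorem linearIndependent_cA_mul_pow_mul_pow :
    LinearIndependent K (fun p : ℕ × ℕ => cA K * aA K ^ p.1 * bA K ^ p.2) := by
  refine .of_comp (cornerEntry K) ?_
  have h : cornerEntry K ∘ (fun p : ℕ × ℕ => cA K * aA K ^ p.1 * bA K ^ p.2) =
      (fun p : ℕ × ℕ => X 0 ^ p.1 * X 1 ^ p.2) ∘ Prod.map id Nat.succ := by
    funext p
    simp [cornerEntry, toMatrix_cA_mul_pow_mul_pow]
  rw [h]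
  exact (linearIndependent_X_pow_mul_X_pow zero_ne_one).comp _
    (Function.injective_id.prodMap Nat.succ_injective)

end AAlg

theorem stmt_12 (K : Type*) [Field K] :
    LinearIndependent K
      (fun p : Bool ⊕ {p : ℕ × ℕ // Odd (p.1 + p.2)} =>
        match p with
        | Sum.inl true => aA K
        | Sum.inl false => bA K
        | Sum.inr ⟨(i, j), _⟩ => cA K * (aA K) ^ i * (bA K) ^ j) := by
  have hc := (AAlg.linearIndependent_cA_mul_pow_mul_pow K).comp _
    (Subtype.val_injective (p := fun p : ℕ × ℕ => Odd (p.1 + p.2)))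
  have h := LinearIndependent.sumElim_of_comp_eq_zero (AAlg.diagEntry K)
    (AAlg.linearIndependent_diagEntry_aA_bA K) hc
    (fun p => AAlg.diagEntry_cA_mul_pow_mul_pow K p.1.1 p.1.2)
  convert h using 1
  · funext p
    rcases p with (_ | _) | ⟨⟨i, j⟩, _⟩ <;> rfl
  all_goals rfl
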